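/- arXiv:2212.11020 — 6 statements merged into one kernel-verified Lean document; each statement's English description precedes it below -/
import Mathlib

section
/- Let F and F' be nonzero subspaces of E of the same dimension. Suppose that dim(F' ∩ V) ≥ dim(F ∩ V) for every V ∈ L (that is, F' is a specialization of F with respect to the lattice L of the Klyachko filtrations). Then for every family t = (t_i)_{i∈I} of nonnegative real weights, the slope satisfies μ_t(F') ≥ μ_t(F). -/
namespace ToricParliament

/-- The `k`-th jump value `A_k(F) = max { j : dim (F ⊓ W j) ≥ l - k + 1 }` of the
filtration of `F` induced by the decreasing family `W` of subspaces of `E`. -/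
noncomputable def jumpVal {E : Type*} [AddCommGroup E] [Module ℂ E]
    (W : ℤ → Submodule ℂ E) (F : Submodule ℂ E) (l k : ℕ) : ℤ :=
  sSup { j : ℤ | l - k + 1 ≤ Module.finrank ℂ ↥(F ⊓ W j) }

/-- The lattice `L` of all intersections `⋂ i, E^i(j_i)` of pieces of the
Klyachko filtrations. -/
def filLattice {E : Type*} [AddCommGroup E] [Module ℂ E] {I : Type*}
    (Efil : I → ℤ → Submodule ℂ E) : Set (Submodule ℂ E) :=
  { V | ∃ js : I → ℤ, V = ⨅ i, Efil i (js i) }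

/-- The slope `μ_t(F) = (1/l) * ∑ i, t i * ∑_{k=1}^{l} A^i_k(F)` of a subspace `F`
with respect to the weights `t`, where `l = dim F`. -/
noncomputable def slope {E : Type*} [AddCommGroup E] [Module ℂ E]
    {I : Type*} [Fintype I]
    (Efil : I → ℤ → Submodule ℂ E) (t : I → ℝ) (F : Submodule ℂ E) : ℝ :=
  (Module.finrank ℂ ↥F : ℝ)⁻¹ *
    ∑ i : I, t i * ∑ k ∈ Finset.Icc 1 (Module.finrank ℂ ↥F),
      (jumpVal (Efil i) F (Module.finrank ℂ ↥F) k : ℝ)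

/-- Lemma "slope": if `F'` is a specialization of `F` with respect to the
lattice `L` of the Klyachko filtrations (i.e. `dim (F' ⊓ V) ≥ dim (F ⊓ V)` for all
`V ∈ L`) and `F`, `F'` are nonzero of the same dimension, then for every family of
nonnegative weights `t` one has `μ_t(F') ≥ μ_t(F)`. -/
theorem slope_le_of_specialization
    {E : Type*} [AddCommGroup E] [Module ℂ E] [FiniteDimensional ℂ E]
    {I : Type*} [Fintype I]
    (Efil : I → ℤ → Submodule ℂ E)
    (hanti : ∀ i, Antitone (Efil i))
    (hexh : ∀ i, ∃ a : ℤ, ∀ j ≤ a, Efil i j = ⊤)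
    (hsep : ∀ i, ∃ b : ℤ, ∀ j : ℤ, b < j → Efil i j = ⊥)
    (F F' : Submodule ℂ E) (hF : F ≠ ⊥) (hF' : F' ≠ ⊥)
    (hdim : Module.finrank ℂ ↥F = Module.finrank ℂ ↥F')
    (hspec : ∀ V ∈ filLattice Efil,
      Module.finrank ℂ ↥(F ⊓ V) ≤ Module.finrank ℂ ↥(F' ⊓ V)) :
    ∀ t : I → ℝ, (∀ i, 0 ≤ t i) → slope Efil t F ≤ slope Efil t F' := by
  classical
  intro t ht
  set l := Module.finrank ℂ ↥F with hl_def
  have hl : 0 < l := by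
    have : Nontrivial F := Submodule.nontrivial_iff_ne_bot.mpr hF
    exact Module.finrank_pos
  -- each filtration piece belongs to the lattice
  have hmem : ∀ (i : I) (j : ℤ),
      Module.finrank ℂ ↥(F ⊓ Efil i j) ≤ Module.finrank ℂ ↥(F' ⊓ Efil i j) := by
    intro i j
    choose a ha using hexh
    refine hspec _ ⟨fun i' => if i' = i then j else a i', ?_⟩
    refine le_antisymm (le_iInf fun i' => ?_) (le_trans (iInf_le _ i) (by simp))
    by_cases h : i' = i
    · subst h; simp
    · simp [h, ha i' (a i') le_rfl]
  -- jump values compare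
  have hjump : ∀ (i : I) (k : ℕ), 1 ≤ k → k ≤ l →
      jumpVal (Efil i) F l k ≤ jumpVal (Efil i) F' l k := by
    intro i k hk1 hkl
    obtain ⟨a, ha⟩ := hexh i
    obtain ⟨b, hb⟩ := hsep i
    unfold jumpVal
    apply csSup_le_csSup
    · refine ⟨b, fun j hj => ?_⟩
      by_contra h
      push_neg at h
      rw [Set.mem_setOf_eq, hb j h, inf_bot_eq, finrank_bot] at hj
      omega
    · refine ⟨a, ?_⟩
      rw [Set.mem_setOf_eq, ha a le_rfl, inf_top_eq]
      omega
    · intro j hj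
      rw [Set.mem_setOf_eq] at hj ⊢
      exact le_trans hj (hmem i j)
  rw [slope, slope, ← hdim]
  refine mul_le_mul_of_nonneg_left ?_ (by positivity)
  refine Finset.sum_le_sum fun i _ => ?_
  refine mul_le_mul_of_nonneg_left ?_ (ht i)
  refine Finset.sum_le_sum fun k hk => ?_
  rw [Finset.mem_Icc] at hk
  exact_mod_cast hjump i k hk.1 hk.2

end ToricParliament
end

section
/- There exists a finite subset G ⊆ E \ {0} with the following two properties: (i) for every V ∈ L, V is spanned by G ∩ V; and (ii) for every nonzero subspace F₀ ⊆ E there exists a subspace F₁ ⊆ E with dim F₁ = dim F₀, F₁ spanned by G ∩ F₁, and dim(F₁ ∩ V) ≥ dim(F₀ ∩ V) for every V ∈ L. -/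
namespace ToricParliament

/-- combinatorial content of Proposition "rouge": there is a finite set
`G ⊆ E \ {0}` (a ground set of the matroid `M(E)`) spanning every member of the
filtration lattice `L`, such that every nonzero subspace `F₀` admits a specialization
`F₁` of the same dimension spanned by `G ∩ F₁` (a flat of the matroid) with
`dim (F₁ ⊓ V) ≥ dim (F₀ ⊓ V)` for every `V ∈ L`. -/
theorem exists_groundSet_flat_specialization
    {E : Type*} [AddCommGroup E] [Module ℂ E] [FiniteDimensional ℂ E]
    {I : Type*} [Fintype I]
    (Efil : I → ℤ → Submodule ℂ E)
    (hanti : ∀ i, Antitone (Efil i))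
    (hexh : ∀ i, ∃ a : ℤ, ∀ j ≤ a, Efil i j = ⊤)
    (hsep : ∀ i, ∃ b : ℤ, ∀ j : ℤ, b < j → Efil i j = ⊥) :
    ∃ G : Finset E, (0 : E) ∉ G ∧
      (∀ V ∈ filLattice Efil, Submodule.span ℂ (↑G ∩ (V : Set E)) = V) ∧
      ∀ F₀ : Submodule ℂ E, F₀ ≠ ⊥ →
        ∃ F₁ : Submodule ℂ E,
          Module.finrank ℂ ↥F₁ = Module.finrank ℂ ↥F₀ ∧
          Submodule.span ℂ (↑G ∩ (F₁ : Set E)) = F₁ ∧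
          ∀ V ∈ filLattice Efil,
            Module.finrank ℂ ↥(F₀ ⊓ V) ≤ Module.finrank ℂ ↥(F₁ ⊓ V) := by
  classical
  choose a ha using hexh
  choose b hb using hsep
  set c : I → ℤ := fun i => max (a i) (b i + 1) with hc
  have hclamp : ∀ (js : I → ℤ) (i : I),
      Efil i (js i) = Efil i (max (a i) (min (js i) (c i))) := by
    intro js i
    rcases le_or_gt (js i) (a i) with h1 | h1
    · have hm : max (a i) (min (js i) (c i)) = a i :=
        max_eq_left (le_trans (min_le_left _ _) h1)
      rw [hm, ha i _ h1, ha i _ le_rfl]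
    · rcases le_or_gt (js i) (c i) with h2 | h2
      · have hm : max (a i) (min (js i) (c i)) = js i := by
          rw [min_eq_left h2]; exact max_eq_right h1.le
        rw [hm]
      · have hm : max (a i) (min (js i) (c i)) = c i := by
          rw [min_eq_right h2.le]; exact max_eq_right (le_max_left _ _)
        have hbc : b i < c i := lt_of_lt_of_le (lt_add_one (b i)) (le_max_right _ _)
        rw [hm, hb i _ hbc, hb i _ (lt_trans hbc h2)]
  have hLfin : (filLattice Efil).Finite := by
    have hsub : filLattice Efil ⊆ (fun js : I → ℤ => ⨅ i, Efil i (js i)) ''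
        (Set.pi Set.univ fun i => Set.Icc (a i) (c i)) := by
      rintro V ⟨js, rfl⟩
      refine ⟨fun i => max (a i) (min (js i) (c i)), fun i _ => ⟨le_max_left _ _, ?_⟩,
        (iInf_congr fun i => (hclamp js i).symm)⟩
      exact max_le (le_max_left _ _) (min_le_right _ _)
    exact Set.Finite.subset
      (Set.Finite.image _ (Set.Finite.pi fun i => Set.finite_Icc _ _)) hsub
  -- spanning finsets without zero
  have hbset : ∀ V : Submodule ℂ E, ∃ s : Finset E,
      ↑s ⊆ (V : Set E) ∧ Submodule.span ℂ (↑s : Set E) = V ∧ (0 : E) ∉ s := by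
    intro V
    obtain ⟨s, hs⟩ := (IsNoetherian.noetherian V)
    refine ⟨s.erase 0, ?_, ?_, Finset.notMem_erase 0 s⟩
    · intro x hx
      have hx' : x ∈ Submodule.span ℂ (↑s : Set E) :=
        Submodule.subset_span (Finset.erase_subset _ _ hx)
      rwa [hs] at hx'
    · apply le_antisymm
      · rw [← hs]
        exact Submodule.span_mono (by exact_mod_cast Finset.erase_subset _ _)
      · rw [← hs]
        rw [show ((s.erase 0 : Finset E) : Set E) = (↑s : Set E) \ {0} by
          simp [Finset.coe_erase]]
        have : (↑s : Set E) ⊆ insert 0 ((↑s : Set E) \ {0}) := by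
          intro x hx
          by_cases hx0 : x = 0
          · subst hx0; exact Set.mem_insert 0 _
          · exact Set.mem_insert_of_mem _ ⟨hx, hx0⟩
        calc Submodule.span ℂ (↑s : Set E)
            ≤ Submodule.span ℂ (insert 0 ((↑s : Set E) \ {0})) := Submodule.span_mono this
          _ = Submodule.span ℂ ((↑s : Set E) \ {0}) := Submodule.span_insert_zero
  choose bset hbsub hbspan hbzero using hbset
  set n := Module.finrank ℂ E with hn
  have hdim : ∀ F : Submodule ℂ E, Module.finrank ℂ ↥F < n + 1 :=
    fun F => Nat.lt_succ_of_le (Submodule.finrank_le F)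
  set LF := hLfin.toFinset with hLF
  let T := Fin (n + 1) × ({V // V ∈ LF} → Fin (n + 1))
  let f : Submodule ℂ E → T := fun F =>
    (⟨Module.finrank ℂ ↥F, hdim F⟩,
      fun V => ⟨Module.finrank ℂ ↥(F ⊓ V.1), hdim _⟩)
  let hfun : T → Submodule ℂ E := fun y => if hy : ∃ F, f F = y then hy.choose else ⊥
  refine ⟨(LF ∪ Finset.image hfun Finset.univ).biUnion bset, ?_, ?_, ?_⟩
  · intro h0
    obtain ⟨W, _, hW⟩ := Finset.mem_biUnion.mp h0
    exact hbzero W hW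
  · intro V hV
    have hVmem : V ∈ LF := hLfin.mem_toFinset.mpr hV
    have hsubG : (bset V : Set E) ⊆
        ↑((LF ∪ Finset.image hfun Finset.univ).biUnion bset) := by
      intro x hx
      exact_mod_cast Finset.mem_biUnion.mpr ⟨V, Finset.mem_union_left _ hVmem, by
        exact_mod_cast hx⟩
    apply le_antisymm
    · rw [Submodule.span_le]; exact Set.inter_subset_right
    · conv_lhs => rw [← hbspan V]
      exact Submodule.span_mono fun x hx => ⟨hsubG hx, hbsub V hx⟩
  · intro F₀ _
    have hy : ∃ F, f F = f F₀ := ⟨F₀, rfl⟩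
    have hF1 : f (hfun (f F₀)) = f F₀ := by
      show f (dite _ _ _) = f F₀
      rw [dif_pos hy]
      exact hy.choose_spec
    refine ⟨hfun (f F₀), ?_, ?_, ?_⟩
    · exact congrArg (fun p : T => (p.1 : ℕ)) hF1
    · have hmem : hfun (f F₀) ∈ LF ∪ Finset.image hfun Finset.univ :=
        Finset.mem_union_right _ (Finset.mem_image_of_mem hfun (Finset.mem_univ _))
      have hsubG : (bset (hfun (f F₀)) : Set E) ⊆
          ↑((LF ∪ Finset.image hfun Finset.univ).biUnion bset) := by
        intro x hx
        exact_mod_cast Finset.mem_biUnion.mpr ⟨hfun (f F₀), hmem, by exact_mod_cast hx⟩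
      apply le_antisymm
      · rw [Submodule.span_le]; exact Set.inter_subset_right
      · conv_lhs => rw [← hbspan (hfun (f F₀))]
        exact Submodule.span_mono fun x hx => ⟨hsubG hx, hbsub _ hx⟩
    · intro V hV
      have hVmem : V ∈ LF := hLfin.mem_toFinset.mpr hV
      exact le_of_eq (congrArg (fun p : T => ((p.2 ⟨V, hVmem⟩ : Fin (n + 1)) : ℕ)) hF1).symm

end ToricParliament
end

section
/- There exists a finite subset G ⊆ E \ {0} such that for every V ∈ L, V is spanned by G ∩ V, and such that for every nonzero subspace F₀ ⊆ E there exists a subspace F₁ ⊆ E with dim F₁ = dim F₀ and F₁ = span(G ∩ F₁) (so that G ∩ F₁ is a flat of the matroid on G), satisfying μ_t(F₁) ≥ μ_t(F₀) for every family t = (t_i)_{i∈I} of nonnegative real weights. -/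
namespace ToricParliament

/-- The "profile" of a subspace: its dimension together with all its jump values. -/
noncomputable def prof {E : Type*} [AddCommGroup E] [Module ℂ E] [FiniteDimensional ℂ E]
    {I : Type*} [Fintype I] (Efil : I → ℤ → Submodule ℂ E) (F : Submodule ℂ E) :
    ℕ × (I → Fin (Module.finrank ℂ E + 1) → ℤ) :=
  (Module.finrank ℂ ↥F, fun i k =>
    if 1 ≤ (k : ℕ) ∧ (k : ℕ) ≤ Module.finrank ℂ ↥F
      then jumpVal (Efil i) F (Module.finrank ℂ ↥F) (k : ℕ) else 0)

lemma slope_eq_of_prof_eq {E : Type*} [AddCommGroup E] [Module ℂ E] [FiniteDimensional ℂ E]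
    {I : Type*} [Fintype I] (Efil : I → ℤ → Submodule ℂ E) {F F' : Submodule ℂ E}
    (h : prof Efil F = prof Efil F') (t : I → ℝ) :
    slope Efil t F = slope Efil t F' := by
  have h1 : Module.finrank ℂ ↥F = Module.finrank ℂ ↥F' := congrArg Prod.fst h
  have h2 : ∀ i, ∀ k ∈ Finset.Icc 1 (Module.finrank ℂ ↥F'),
      jumpVal (Efil i) F (Module.finrank ℂ ↥F') k
        = jumpVal (Efil i) F' (Module.finrank ℂ ↥F') k := by
    intro i k hk
    rw [Finset.mem_Icc] at hk
    have hkN : k < Module.finrank ℂ E + 1 :=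
      Nat.lt_succ_of_le (hk.2.trans (Submodule.finrank_le F'))
    have h3 := congrFun (congrFun (congrArg Prod.snd h) i) ⟨k, hkN⟩
    simp only [prof] at h3
    rw [if_pos ⟨hk.1, h1 ▸ hk.2⟩, if_pos ⟨hk.1, hk.2⟩] at h3
    rw [← h1] at h3 ⊢
    exact h3
  unfold slope
  rw [h1]
  congr 1
  refine Finset.sum_congr rfl fun i _ => ?_
  congr 1
  refine Finset.sum_congr rfl fun k hk => ?_
  exact congrArg (fun z : ℤ => (z : ℝ)) (h2 i k hk)

lemma jumpVal_mem_Icc {E : Type*} [AddCommGroup E] [Module ℂ E] [FiniteDimensional ℂ E]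
    (W : ℤ → Submodule ℂ E) {a b : ℤ} (hA : W a = ⊤) (hB : ∀ j : ℤ, b < j → W j = ⊥)
    {F : Submodule ℂ E} (hF : F ≠ ⊥) {k : ℕ} (hk1 : 1 ≤ k)
    (hk2 : k ≤ Module.finrank ℂ ↥F) :
    jumpVal W F (Module.finrank ℂ ↥F) k ∈ Set.Icc a b := by
  have hl1 : 1 ≤ Module.finrank ℂ ↥F :=
    Nat.one_le_iff_ne_zero.mpr (fun h => hF (Submodule.finrank_eq_zero.mp h))
  have haS : a ∈ { j : ℤ | Module.finrank ℂ ↥F - k + 1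
      ≤ Module.finrank ℂ ↥(F ⊓ W j) } := by
    have e1 : F ⊓ W a = F := by rw [hA, inf_top_eq]
    have e2 := congrArg (fun X : Submodule ℂ E => Module.finrank ℂ ↥X) e1
    simp only [Set.mem_setOf_eq, e2]
    omega
  have hbdd : ∀ j ∈ { j : ℤ | Module.finrank ℂ ↥F - k + 1
      ≤ Module.finrank ℂ ↥(F ⊓ W j) }, j ≤ b := by
    intro j hj
    by_contra hbj
    push_neg at hbj
    have e1 : F ⊓ W j = ⊥ := by rw [hB j hbj, inf_bot_eq]
    have e2 := congrArg (fun X : Submodule ℂ E => Module.finrank ℂ ↥X) e1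
    simp only [Set.mem_setOf_eq, e2, finrank_bot ℂ E] at hj
    omega
  exact ⟨le_csSup ⟨b, hbdd⟩ haS, csSup_le ⟨a, haS⟩ hbdd⟩

/-- Proposition "rouge": there is a finite set `G ⊆ E \ {0}` spanning every
member of the filtration lattice `L`, such that every nonzero subspace `F₀` admits a
subspace `F₁` of the same dimension with `F₁ = span (G ∩ F₁)` (a flat of the matroid on
`G`) and `μ_t(F₁) ≥ μ_t(F₀)` for every family of nonnegative weights `t`. -/
theorem exists_groundSet_flat_slope_ge
    {E : Type*} [AddCommGroup E] [Module ℂ E] [FiniteDimensional ℂ E]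
    {I : Type*} [Fintype I]
    (Efil : I → ℤ → Submodule ℂ E)
    (hanti : ∀ i, Antitone (Efil i))
    (hexh : ∀ i, ∃ a : ℤ, ∀ j ≤ a, Efil i j = ⊤)
    (hsep : ∀ i, ∃ b : ℤ, ∀ j : ℤ, b < j → Efil i j = ⊥) :
    ∃ G : Finset E, (0 : E) ∉ G ∧
      (∀ V ∈ filLattice Efil, Submodule.span ℂ (↑G ∩ (V : Set E)) = V) ∧
      ∀ F₀ : Submodule ℂ E, F₀ ≠ ⊥ →
        ∃ F₁ : Submodule ℂ E,
          Module.finrank ℂ ↥F₁ = Module.finrank ℂ ↥F₀ ∧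
          Submodule.span ℂ (↑G ∩ (F₁ : Set E)) = F₁ ∧
          ∀ t : I → ℝ, (∀ i, 0 ≤ t i) → slope Efil t F₀ ≤ slope Efil t F₁ := by
  classical
  choose a ha using hexh
  choose b hb using hsep
  -- the set of profiles of nonzero subspaces is finite
  have hPfin : (prof Efil '' {F : Submodule ℂ E | F ≠ ⊥}).Finite := by
    have hsub : prof Efil '' {F : Submodule ℂ E | F ≠ ⊥} ⊆
        (Set.Iic (Module.finrank ℂ E)) ×ˢ
          (Set.pi Set.univ fun i : I => Set.pi Set.univ
            fun _ : Fin (Module.finrank ℂ E + 1) => insert 0 (Set.Icc (a i) (b i))) := by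
      rintro _ ⟨F, hF, rfl⟩
      refine Set.mem_prod.mpr ⟨Submodule.finrank_le F, ?_⟩
      intro i _
      intro k _
      simp only [prof]
      split_ifs with h
      · exact Set.mem_insert_iff.mpr (Or.inr (jumpVal_mem_Icc (Efil i) (ha i (a i) le_rfl) (hb i) hF h.1 h.2))
      · exact Set.mem_insert _ _
    refine Set.Finite.subset ?_ hsub
    exact (Set.finite_Iic _).prod (Set.Finite.pi fun i => Set.Finite.pi fun _ =>
      (Set.finite_Icc _ _).insert 0)
  -- representatives of profiles
  set rep : ℕ × (I → Fin (Module.finrank ℂ E + 1) → ℤ) → Submodule ℂ E := fun p =>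
    if h : ∃ F : Submodule ℂ E, prof Efil F = p then h.choose else ⊥ with hrepdef
  have hrep : ∀ F : Submodule ℂ E, prof Efil (rep (prof Efil F)) = prof Efil F := by
    intro F
    have h : ∃ F' : Submodule ℂ E, prof Efil F' = prof Efil F := ⟨F, rfl⟩
    simp only [hrepdef, dif_pos h]
    exact h.choose_spec
  -- the filtration lattice is finite
  have hLfin : (filLattice Efil).Finite := by
    have hsub : filLattice Efil ⊆ (fun js : I → ℤ => ⨅ i, Efil i (js i)) ''
        (Set.pi Set.univ fun i => Set.Icc (a i) (max (a i) (b i + 1))) := by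
      rintro V ⟨js, rfl⟩
      refine ⟨fun i => max (a i) (min (js i) (b i + 1)), fun i _ => ?_, ?_⟩
      · exact ⟨le_max_left _ _, max_le_max le_rfl (min_le_right _ _)⟩
      · refine iInf_congr fun i => ?_
        show Efil i (max (a i) (min (js i) (b i + 1))) = Efil i (js i)
        rcases le_or_gt (js i) (a i) with h1 | h1
        · have hc : max (a i) (min (js i) (b i + 1)) = a i := by
            rcases le_or_gt (js i) (b i + 1) with h2 | h2 <;> omega
          rw [hc, ha i _ le_rfl, ha i _ h1]
        · rcases le_or_gt (js i) (b i) with h2 | h2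
          · have hc : max (a i) (min (js i) (b i + 1)) = js i := by omega
            rw [hc]
          · have hc : b i < max (a i) (min (js i) (b i + 1)) ∨
                max (a i) (min (js i) (b i + 1)) = a i ∧ b i < a i := by omega
            rw [hb i _ h2]
            rcases hc with hc | hc
            · rw [hb i _ hc]
            · rw [hc.1, hb i _ hc.2]
    exact Set.Finite.subset (Set.Finite.image _ (Set.Finite.pi fun i => Set.finite_Icc _ _)) hsub
  -- the finite family of subspaces we must span
  have hSfin : (filLattice Efil ∪ rep '' (prof Efil '' {F : Submodule ℂ E | F ≠ ⊥})).Finite :=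
    hLfin.union (hPfin.image rep)
  -- finite spanning sets
  have hsp : ∀ W : Submodule ℂ E, ∃ s : Finset E, Submodule.span ℂ (↑s : Set E) = W :=
    fun W => IsNoetherian.noetherian W
  choose sp hspan using hsp
  set G : Finset E := hSfin.toFinset.biUnion (fun W => (sp W).erase 0) with hGdef
  have key : ∀ W ∈ filLattice Efil ∪ rep '' (prof Efil '' {F : Submodule ℂ E | F ≠ ⊥}),
      Submodule.span ℂ (↑G ∩ (W : Set E)) = W := by
    intro W hW
    refine le_antisymm (Submodule.span_le.mpr Set.inter_subset_right) ?_
    have h1 : ((↑(sp W) : Set E) \ {0}) ⊆ ↑G ∩ (W : Set E) := by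
      rintro x ⟨hx, hx0⟩
      refine ⟨?_, ?_⟩
      · rw [hGdef]
        simp only [Finset.coe_biUnion, Set.mem_iUnion]
        exact ⟨W, hSfin.mem_toFinset.mpr hW, Finset.mem_coe.mpr
          (Finset.mem_erase.mpr ⟨hx0, Finset.mem_coe.mp hx⟩)⟩
      · have hxs := Submodule.subset_span (R := ℂ) hx
        rwa [hspan W] at hxs
    have h2 : W ≤ Submodule.span ℂ ((↑(sp W) : Set E) \ {0}) := by
      have h3 : Submodule.span ℂ (↑(sp W) : Set E)
          ≤ Submodule.span ℂ ((↑(sp W) : Set E) \ {0}) := by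
        refine Submodule.span_le.mpr fun x hx => ?_
        rcases eq_or_ne x 0 with rfl | hx0
        · exact Submodule.zero_mem _
        · exact Submodule.subset_span ⟨hx, hx0⟩
      exact le_of_eq_of_le (hspan W).symm h3
    exact h2.trans (Submodule.span_mono h1)
  refine ⟨G, ?_, ?_, ?_⟩
  · rw [hGdef]
    simp only [Finset.mem_biUnion]
    rintro ⟨W, -, hW⟩
    exact (Finset.notMem_erase 0 _) hW
  · exact fun V hV => key V (Or.inl hV)
  · intro F₀ hF₀
    refine ⟨rep (prof Efil F₀), ?_, ?_, ?_⟩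
    · exact congrArg Prod.fst (hrep F₀)
    · exact key _ (Or.inr ⟨prof Efil F₀, ⟨F₀, hF₀, rfl⟩, rfl⟩)
    · intro t _
      exact (slope_eq_of_prof_eq Efil (hrep F₀) t).ge


end ToricParliament
end

section
/- There exists a finite subset G ⊆ E \ {0} with span(G ∩ V) = V for every V ∈ L, such that for every family t = (t_i)_{i∈I} of nonnegative real weights the following equivalence holds: μ_t(F) ≤ μ_t(E) for every nonzero subspace F ⊆ E if and only if μ_t(F) ≤ μ_t(E) for every nonzero subspace F ⊆ E satisfying F = span(G ∩ F). -/
namespace ToricParliament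

section Aux

open Module Submodule

variable {E : Type*} [AddCommGroup E] [Module ℂ E] [FiniteDimensional ℂ E]

/-- Every subspace of a finite-dimensional space has a finite spanning set of
nonzero vectors contained in it. -/
lemma exists_spanFinset (V : Submodule ℂ E) :
    ∃ s : Finset E, (0 : E) ∉ s ∧ (↑s : Set E) ⊆ (V : Set E) ∧
      Submodule.span ℂ (s : Set E) = V := by
  classical
  obtain ⟨s, hs⟩ := IsNoetherian.noetherian V
  refine ⟨s.erase 0, Finset.notMem_erase _ _, ?_, ?_⟩
  · intro x hx
    have hx' : x ∈ (s : Set E) := Finset.mem_coe.2 (Finset.mem_of_mem_erase (by exact_mod_cast hx))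
    rw [← hs]
    exact Submodule.subset_span hx'
  · apply le_antisymm
    · rw [← hs]
      exact Submodule.span_mono (fun x hx => Finset.mem_of_mem_erase hx)
    · rw [← hs]
      have hsub : (s : Set E) ⊆ insert (0 : E) (↑(s.erase 0) : Set E) := by
        intro x hx
        by_cases hx0 : x = 0
        · exact hx0 ▸ Set.mem_insert _ _
        · exact Set.mem_insert_of_mem _ (by exact_mod_cast Finset.mem_erase.2 ⟨hx0, hx⟩)
      calc Submodule.span ℂ (s : Set E)
          ≤ Submodule.span ℂ (insert (0 : E) (↑(s.erase 0) : Set E)) := Submodule.span_mono hsub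
        _ = Submodule.span ℂ (↑(s.erase 0) : Set E) := Submodule.span_insert_zero

/-- Counting lemma: the number of `k ∈ [1, l]` with `l - k + 1 ≤ m` is `m` when `m ≤ l`. -/
lemma count_filter_Icc (l m : ℕ) (hm : m ≤ l) :
    ((Finset.Icc 1 l).filter fun k => l - k + 1 ≤ m).card = m := by
  classical
  have h : ((Finset.Icc 1 l).filter fun k => l - k + 1 ≤ m) = Finset.Icc (l + 1 - m) l := by
    ext k
    simp only [Finset.mem_filter, Finset.mem_Icc]
    omega
  rw [h, Nat.card_Icc]
  omega

/-- The sum of the jump values of `F` along a filtration `W` equals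
`l * a + ∑_{j=a+1}^{b} dim (F ⊓ W j)`. -/
lemma sum_jumpVal (W : ℤ → Submodule ℂ E) (hW : Antitone W) (a b : ℤ) (hab : a ≤ b)
    (ha : ∀ j ≤ a, W j = ⊤) (hb : ∀ j, b < j → W j = ⊥) (F : Submodule ℂ E) :
    ∑ k ∈ Finset.Icc 1 (finrank ℂ F), jumpVal W F (finrank ℂ F) k
      = (finrank ℂ F : ℤ) * a
        + ∑ j ∈ Finset.Icc (a + 1) b, (finrank ℂ ↥(F ⊓ W j) : ℤ) := by
  classical
  set l := finrank ℂ F with hl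
  set d : ℤ → ℕ := fun j => finrank ℂ ↥(F ⊓ W j) with hd
  have hdanti : Antitone d := fun j j' h =>
    Submodule.finrank_mono (inf_le_inf_left F (hW h))
  have hdl : ∀ j, d j ≤ l := fun j => Submodule.finrank_mono inf_le_left
  have hda : ∀ j ≤ a, d j = l := fun j hj =>
    le_antisymm (hdl j) (Submodule.finrank_mono (le_inf le_rfl (by rw [ha j hj]; exact le_top)))
  have hd0 : ∀ j, b < j → d j = 0 := by
    intro j hj
    simp [hd, hb j hj]
  have key : ∀ k ∈ Finset.Icc 1 l,
      jumpVal W F l k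
        = a + (((Finset.Icc (a + 1) b).filter fun j => l - k + 1 ≤ d j).card : ℤ) := by
    intro k hk
    rw [Finset.mem_Icc] at hk
    set m : ℕ := l - k + 1 with hm
    have hm1 : 1 ≤ m := by omega
    have hml : m ≤ l := by omega
    set S : Set ℤ := { j : ℤ | m ≤ d j } with hS
    have haS : a ∈ S := by
      simp only [hS, Set.mem_setOf_eq, hda a le_rfl]
      exact hml
    have hSb : S ⊆ Set.Iic b := by
      intro j hj
      by_contra hjb
      rw [Set.mem_Iic] at *
      push_neg at hjb
      have := hd0 j hjb
      simp only [hS, Set.mem_setOf_eq, this] at hj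
      omega
    have hbdd : BddAbove S := ⟨b, fun j hj => hSb hj⟩
    have hne : S.Nonempty := ⟨a, haS⟩
    set J := sSup S with hJ
    have hJmem : J ∈ S := Int.csSup_mem hne hbdd
    have haJ : a ≤ J := le_csSup hbdd haS
    have hJb : J ≤ b := hSb hJmem
    have hiff : ∀ j : ℤ, (m ≤ d j) ↔ j ≤ J := by
      intro j
      constructor
      · intro h
        exact le_csSup hbdd h
      · intro h
        exact le_trans hJmem (hdanti h)
    have hfil : ((Finset.Icc (a + 1) b).filter fun j => l - k + 1 ≤ d j)
        = Finset.Icc (a + 1) J := by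
      ext j
      simp only [Finset.mem_filter, Finset.mem_Icc, ← hm, hiff j]
      omega
    have hjv : jumpVal W F l k = J := rfl
    rw [hjv, hfil, Int.card_Icc]
    omega
  rw [Finset.sum_congr rfl key, Finset.sum_add_distrib, Finset.sum_const, Nat.card_Icc]
  have hswap : ∑ k ∈ Finset.Icc 1 l,
      (((Finset.Icc (a + 1) b).filter fun j => l - k + 1 ≤ d j).card : ℤ)
      = ∑ j ∈ Finset.Icc (a + 1) b, (d j : ℤ) := by
    have hnat : ∑ k ∈ Finset.Icc 1 l,
        ((Finset.Icc (a + 1) b).filter fun j => l - k + 1 ≤ d j).card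
        = ∑ j ∈ Finset.Icc (a + 1) b, d j := by
      simp only [Finset.card_filter]
      rw [Finset.sum_comm]
      refine Finset.sum_congr rfl fun j _ => ?_
      rw [← Finset.card_filter]
      exact count_filter_Icc l (d j) (hdl j)
    exact_mod_cast hnat
  rw [hswap]
  push_cast
  ring

/-- The slope in terms of dimension data over the finite window `[a i + 1, b i]`. -/
lemma slope_eq_of_window {I : Type*} [Fintype I] (Efil : I → ℤ → Submodule ℂ E)
    (hanti : ∀ i, Antitone (Efil i)) (a b : I → ℤ) (hab : ∀ i, a i ≤ b i)
    (ha : ∀ i, ∀ j ≤ a i, Efil i j = ⊤) (hb : ∀ i, ∀ j, b i < j → Efil i j = ⊥)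
    (t : I → ℝ) (F : Submodule ℂ E) :
    slope Efil t F = (finrank ℂ F : ℝ)⁻¹ * ∑ i : I, t i *
      ((finrank ℂ F : ℝ) * (a i : ℝ)
        + ((∑ j ∈ Finset.Icc (a i + 1) (b i), finrank ℂ ↥(F ⊓ Efil i j) : ℕ) : ℝ)) := by
  unfold slope
  congr 1
  refine Finset.sum_congr rfl fun i _ => ?_
  congr 1
  have h := sum_jumpVal (Efil i) (hanti i) (a i) (b i) (hab i) (ha i) (hb i) F
  calc ∑ k ∈ Finset.Icc 1 (finrank ℂ F), (jumpVal (Efil i) F (finrank ℂ F) k : ℝ)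
      = ((∑ k ∈ Finset.Icc 1 (finrank ℂ F), jumpVal (Efil i) F (finrank ℂ F) k : ℤ) : ℝ) := by
        push_cast
        rfl
    _ = _ := by
        rw [h]
        push_cast
        ring

end Aux

/-- main theorem, semistability case: there is a finite set `G ⊆ E \ {0}`
spanning every member of the filtration lattice `L`, such that for all nonnegative
weights `t`, the slope inequality `μ_t(F) ≤ μ_t(E)` holds for every nonzero subspace `F`
if and only if it holds for every nonzero subspace `F` with `F = span (G ∩ F)` (i.e. for
the flats of the matroid on `G`). -/
theorem semistable_iff_flats
    {E : Type*} [AddCommGroup E] [Module ℂ E] [FiniteDimensional ℂ E]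
    {I : Type*} [Fintype I]
    (Efil : I → ℤ → Submodule ℂ E)
    (hanti : ∀ i, Antitone (Efil i))
    (hexh : ∀ i, ∃ a : ℤ, ∀ j ≤ a, Efil i j = ⊤)
    (hsep : ∀ i, ∃ b : ℤ, ∀ j : ℤ, b < j → Efil i j = ⊥) :
    ∃ G : Finset E, (0 : E) ∉ G ∧
      (∀ V ∈ filLattice Efil, Submodule.span ℂ (↑G ∩ (V : Set E)) = V) ∧
      ∀ t : I → ℝ, (∀ i, 0 ≤ t i) →
        ((∀ F : Submodule ℂ E, F ≠ ⊥ → slope Efil t F ≤ slope Efil t ⊤) ↔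
          (∀ F : Submodule ℂ E, F ≠ ⊥ → Submodule.span ℂ (↑G ∩ (F : Set E)) = F →
            slope Efil t F ≤ slope Efil t ⊤)) := by
  classical
  open Module Submodule in
  -- Normalize the bounds of the filtrations.
  choose A hA using hexh
  choose B hB using hsep
  set a : I → ℤ := fun i => min (A i) (B i) with ha_def
  set b : I → ℤ := B with hb_def
  have hab : ∀ i, a i ≤ b i := fun i => min_le_right _ _
  have ha : ∀ i, ∀ j ≤ a i, Efil i j = ⊤ := fun i j hj =>
    hA i j (le_trans hj (min_le_left _ _))
  have hb : ∀ i, ∀ j, b i < j → Efil i j = ⊥ := fun i j hj => hB i j hj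
  -- The profile of a subspace: dimension together with the window dimension sums.
  set Ψ : I → Submodule ℂ E → ℕ := fun i F =>
    ∑ j ∈ Finset.Icc (a i + 1) (b i), finrank ℂ ↥(F ⊓ Efil i j) with hΨ
  set P : Submodule ℂ E → ℕ × (I → ℕ) := fun F => (finrank ℂ F, fun i => Ψ i F) with hP
  have hPfin : (Set.range P).Finite := by
    have h1 : (Set.Iic (Module.finrank ℂ E)).Finite := Set.finite_Iic _
    have h2 : (Set.Iic (fun i => ∑ j ∈ Finset.Icc (a i + 1) (b i), Module.finrank ℂ E :
        I → ℕ)).Finite := Set.finite_Iic _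
    refine ((h1.prod h2).subset ?_)
    rintro p ⟨F, rfl⟩
    refine ⟨Set.mem_Iic.2 ?_, Set.mem_Iic.2 fun i => ?_⟩
    · show finrank ℂ ↥F ≤ finrank ℂ E
      exact F.finrank_le
    · show ∑ j ∈ Finset.Icc (a i + 1) (b i), finrank ℂ ↥(F ⊓ Efil i j)
        ≤ ∑ j ∈ Finset.Icc (a i + 1) (b i), finrank ℂ E
      exact Finset.sum_le_sum fun j _ => Submodule.finrank_le (F ⊓ Efil i j)
  -- The filtration lattice is finite.
  have hLfin : (filLattice Efil).Finite := by
    have hfin : (Set.pi Set.univ fun i => Set.Icc (a i) (b i + 1)).Finite :=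
      Set.Finite.pi fun i => Set.finite_Icc _ _
    refine (hfin.image fun js => ⨅ i, Efil i (js i)).subset ?_
    rintro V ⟨js, rfl⟩
    refine ⟨fun i => max (a i) (min (js i) (b i + 1)), ?_, ?_⟩
    · intro i _
      refine ⟨le_max_left _ _, max_le (by linarith [hab i]) (min_le_right _ _)⟩
    · refine iInf_congr fun i => ?_
      show Efil i (max (a i) (min (js i) (b i + 1))) = Efil i (js i)
      have hi := hab i
      rcases le_or_gt (js i) (a i) with h | h
      · have h1 : max (a i) (min (js i) (b i + 1)) = a i := by omega
        rw [h1, ha i _ le_rfl, ha i _ h]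
      · rcases le_or_gt (js i) (b i) with h2 | h2
        · have h1 : max (a i) (min (js i) (b i + 1)) = js i := by omega
          rw [h1]
        · have h1 : max (a i) (min (js i) (b i + 1)) = b i + 1 := by omega
          rw [h1, hb i _ (by omega), hb i _ h2]
  -- Spanning finsets and flat representatives of each profile.
  choose sp hsp0 hspsub hspspan using exists_spanFinset (E := E)
  set rep : ℕ × (I → ℕ) → Submodule ℂ E := fun p =>
    if h : ∃ F, F ≠ ⊥ ∧ P F = p then h.choose else ⊥ with hrep_def
  have hrep : ∀ F, F ≠ ⊥ → rep (P F) ≠ ⊥ ∧ P (rep (P F)) = P F := by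
    intro F hF
    have h : ∃ F', F' ≠ ⊥ ∧ P F' = P F := ⟨F, hF, rfl⟩
    simpa only [hrep_def, dif_pos h] using h.choose_spec
  set G : Finset E :=
    hLfin.toFinset.biUnion sp ∪ hPfin.toFinset.biUnion (fun p => sp (rep p)) with hG
  have hspanG : ∀ V : Submodule ℂ E, (↑(sp V) : Set E) ⊆ (↑G : Set E) →
      Submodule.span ℂ (↑G ∩ (V : Set E)) = V := by
    intro V hsub
    apply le_antisymm
    · rw [Submodule.span_le]
      exact Set.inter_subset_right
    · conv_lhs => rw [← hspspan V]
      apply Submodule.span_mono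
      intro x hx
      exact ⟨hsub hx, hspsub V hx⟩
  refine ⟨G, ?_, ?_, ?_⟩
  · -- 0 ∉ G
    intro h0
    rw [hG, Finset.mem_union] at h0
    rcases h0 with h0 | h0 <;>
    · rw [Finset.mem_biUnion] at h0
      obtain ⟨V, _, hV⟩ := h0
      exact hsp0 _ hV
  · -- every member of the lattice is spanned by its G-points
    intro V hV
    apply hspanG
    intro x hx
    exact Finset.mem_coe.2 (Finset.mem_union_left _
      (Finset.mem_biUnion.2 ⟨V, hLfin.mem_toFinset.2 hV, by exact_mod_cast hx⟩))
  · -- the equivalence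
    intro t ht
    constructor
    · intro H F hF _
      exact H F hF
    · intro H F hF
      obtain ⟨hne, hPP⟩ := hrep F hF
      set F' := rep (P F) with hF'
      have hflat : Submodule.span ℂ (↑G ∩ (F' : Set E)) = F' := by
        apply hspanG
        intro x hx
        refine Finset.mem_coe.2 (Finset.mem_union_right _ (Finset.mem_biUnion.2
          ⟨P F, hPfin.mem_toFinset.2 ⟨F, rfl⟩, by exact_mod_cast hx⟩))
      have hle := H F' hne hflat
      have h1 : finrank ℂ ↥F' = finrank ℂ ↥F := congrArg Prod.fst hPP
      have h2 : ∀ i, Ψ i F' = Ψ i F := fun i => congrFun (congrArg Prod.snd hPP) i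
      have heq : slope Efil t F = slope Efil t F' := by
        rw [slope_eq_of_window Efil hanti a b hab ha hb t F,
          slope_eq_of_window Efil hanti a b hab ha hb t F', h1]
        congr 1
        refine Finset.sum_congr rfl fun i _ => ?_
        have := h2 i
        simp only [hΨ] at this
        rw [this]
      rw [heq]
      exact hle

end ToricParliament
end

section
/- Let σ ⊆ I be a subset of the index set and suppose there exists a decomposition E = ⊕_{u∈U} L_u into one-dimensional subspaces such that for every i ∈ σ and every j ∈ ℤ, the subspace E^i(j) is the sum of those L_u contained in E^i(j) (a compatible basis for the cone σ). Let F ⊆ E be a subspace such that the sublattice of the lattice of subspaces of E generated by {F} ∪ { E^i(j) : i ∈ σ, j ∈ ℤ } under sum and intersection is distributive. Then there exists a decomposition E = ⊕_{u∈U'} L'_u into one-dimensional subspaces such that for every i ∈ σ and j ∈ ℤ, E^i(j) is the sum of those L'_u contained in it, and moreover F is the sum of those L'_u contained in F. -/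
namespace ToricParliament

open Module Submodule Finset Set

/-- The sublattice of the lattice of subspaces of `E` generated by a set `S` of
subspaces under sum and intersection. -/
inductive GenLat {E : Type*} [AddCommGroup E] [Module ℂ E]
    (S : Set (Submodule ℂ E)) : Submodule ℂ E → Prop
  | base {V : Submodule ℂ E} : V ∈ S → GenLat S V
  | sup {A B : Submodule ℂ E} : GenLat S A → GenLat S B → GenLat S (A ⊔ B)
  | inf {A B : Submodule ℂ E} : GenLat S A → GenLat S B → GenLat S (A ⊓ B)

section Aux

variable {E : Type*} [AddCommGroup E] [Module ℂ E]


variable {E : Type*} [AddCommGroup E] [Module ℂ E]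

theorem supg_mem (G : Finset (Submodule ℂ E)) (hbot : ⊥ ∈ G)
    (hsupc : ∀ A ∈ G, ∀ B ∈ G, A ⊔ B ∈ G) :
    ∀ T : Finset (Submodule ℂ E), (∀ x ∈ T, x ∈ G) → T.sup id ∈ G := by
  classical
  intro T
  induction T using Finset.induction_on with
  | empty => intro _; simpa using hbot
  | insert _ _ hnot ih =>
    intro h
    rw [Finset.sup_insert]
    exact hsupc _ (h _ (Finset.mem_insert_self _ _)) _
      (ih fun x hx => h _ (Finset.mem_insert_of_mem hx))

theorem adapted_of_lattice [FiniteDimensional ℂ E] (G : Finset (Submodule ℂ E))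
    (hbot : ⊥ ∈ G) (htop : ⊤ ∈ G)
    (hsupc : ∀ A ∈ G, ∀ B ∈ G, A ⊔ B ∈ G) (hinfc : ∀ A ∈ G, ∀ B ∈ G, A ⊓ B ∈ G)
    (hd : ∀ A ∈ G, ∀ B ∈ G, ∀ C ∈ G, A ⊓ (B ⊔ C) = (A ⊓ B) ⊔ (A ⊓ C)) :
    ∃ (n : ℕ) (L' : Fin n → Submodule ℂ E),
      (∀ u, finrank ℂ (L' u) = 1) ∧ iSupIndep L' ∧ (⨆ u, L' u) = ⊤ ∧
      ∀ V ∈ G, V = ⨆ u ∈ {u | L' u ≤ V}, L' u := by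
  classical
  -- the "lower cover" of V in G
  set pred : Submodule ℂ E → Submodule ℂ E :=
    fun V => (G.filter (· < V)).sup id with hpred
  have hpredG : ∀ V, pred V ∈ G := fun V =>
    supg_mem G hbot hsupc _ (fun x hx => (Finset.mem_filter.1 hx).1)
  have hpred_le : ∀ V, pred V ≤ V := fun V =>
    Finset.sup_le fun W hW => (Finset.mem_filter.1 hW).2.le
  have hle_pred : ∀ {W V}, W ∈ G → W < V → W ≤ pred V := fun {W V} hG hlt =>
    Finset.le_sup (f := id) (Finset.mem_filter.2 ⟨hG, hlt⟩)
  -- join-irreducibles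
  set JI : Finset (Submodule ℂ E) := G.filter (fun V => pred V < V) with hJI
  have hJIG : ∀ J ∈ JI, J ∈ G := fun J hJ => (Finset.mem_filter.1 hJ).1
  have hJIpred : ∀ J ∈ JI, pred J < J := fun J hJ => (Finset.mem_filter.1 hJ).2
  -- complements
  have hC : ∀ J : Submodule ℂ E, ∃ C : Submodule ℂ E,
      (pred J ⊔ C = J ∨ ¬ J ∈ G) ∧ pred J ⊓ C = ⊥ ∧ C ≤ J := by
    intro J
    obtain ⟨Q, hQ⟩ := Submodule.exists_isCompl (pred J)
    refine ⟨Q ⊓ J, ?_, ?_, inf_le_right⟩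
    · left
      rw [← sup_inf_assoc_of_le _ (hpred_le J), hQ.sup_eq_top, top_inf_eq]
    · rw [eq_bot_iff]
      exact le_trans (inf_le_inf_left _ inf_le_left) hQ.inf_eq_bot.le
  choose C hC1 hC2 hC3 using hC
  have hC1' : ∀ J ∈ G, pred J ⊔ C J = J := fun J hJ => (hC1 J).resolve_right (by simpa using hJ)
  have hCrank : ∀ J ∈ G, finrank ℂ (C J) + finrank ℂ (pred J) = finrank ℂ J := by
    intro J hJ
    have := Submodule.finrank_sup_add_finrank_inf_eq (pred J) (C J)
    rw [hC1' J hJ, hC2 J, finrank_bot] at this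
    omega
  -- spanning
  have hspan : ∀ n, ∀ V ∈ G, finrank ℂ V ≤ n → V ≤ (JI.filter (· ≤ V)).sup C := by
    intro n
    induction n with
    | zero =>
      intro V _ h
      have : V = ⊥ := Submodule.finrank_eq_zero.1 (Nat.le_zero.1 h)
      simp [this]
    | succ n ih =>
      intro V hVG h
      by_cases hji : pred V < V
      · have h1 : pred V ≤ (JI.filter (· ≤ V)).sup C := by
          refine le_trans (ih _ (hpredG V) ?_) (Finset.sup_mono ?_)
          · have := Submodule.finrank_lt_finrank_of_lt hji
            omega
          · exact Finset.monotone_filter_right _ (fun J _ hJ => le_trans hJ (hpred_le V))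
        have h2 : C V ≤ (JI.filter (· ≤ V)).sup C :=
          Finset.le_sup (Finset.mem_filter.2 ⟨Finset.mem_filter.2 ⟨hVG, hji⟩, le_rfl⟩)
        calc V = pred V ⊔ C V := (hC1' V hVG).symm
          _ ≤ _ := sup_le h1 h2
      · have hVpred : V = pred V := ((hpred_le V).lt_or_eq.resolve_left hji).symm
        conv_lhs => rw [hVpred]
        refine Finset.sup_le fun W hW => ?_
        obtain ⟨hWG, hWlt⟩ := Finset.mem_filter.1 hW
        refine le_trans (ih W hWG ?_) (Finset.sup_mono ?_)
        · have := Submodule.finrank_lt_finrank_of_lt hWlt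
          omega
        · exact Finset.monotone_filter_right _ (fun J _ hJ => le_trans hJ hWlt.le)
  -- join-irreducibles below ⊥
  have hbotfilter : JI.filter (· ≤ (⊥ : Submodule ℂ E)) = ∅ := by
    rw [Finset.filter_eq_empty_iff]
    intro J hJ hle
    have : J = ⊥ := le_bot_iff.1 hle
    exact absurd (this ▸ hJIpred J hJ) (by simp)
  -- primality of join-irreducibles
  have hJIprime : ∀ J ∈ JI, ∀ A ∈ G, ∀ B ∈ G, J ≤ A ⊔ B → J ≤ A ∨ J ≤ B := by
    intro J hJ A hA B hB hle
    by_contra hcon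
    push_neg at hcon
    have h1 : J ⊓ A ≤ pred J :=
      hle_pred (hinfc _ (hJIG J hJ) _ hA) (lt_of_le_of_ne inf_le_left
        (fun he => hcon.1 (he ▸ inf_le_right)))
    have h2 : J ⊓ B ≤ pred J :=
      hle_pred (hinfc _ (hJIG J hJ) _ hB) (lt_of_le_of_ne inf_le_left
        (fun he => hcon.2 (he ▸ inf_le_right)))
    have heq : J = (J ⊓ A) ⊔ (J ⊓ B) := by
      rw [← hd _ (hJIG J hJ) _ hA _ hB, inf_eq_left.2 hle]
    have hJle : J ≤ pred J := by
      calc J = (J ⊓ A) ⊔ (J ⊓ B) := heq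
        _ ≤ pred J := sup_le h1 h2
    exact absurd hJle (hJIpred J hJ).not_ge
  -- dimension count
  set sumJI : Submodule ℂ E → ℕ :=
    fun V => ∑ J ∈ JI.filter (· ≤ V), finrank ℂ (C J) with hsumJI
  have hsumbot : sumJI ⊥ = 0 := by
    show ∑ J ∈ JI.filter (· ≤ (⊥ : Submodule ℂ E)), finrank ℂ (C J) = 0
    rw [hbotfilter, Finset.sum_empty]
  have hstep : ∀ A ∈ G, ∀ B ∈ G, sumJI A = finrank ℂ ↥A → sumJI B = finrank ℂ ↥B →
      sumJI (A ⊓ B) = finrank ℂ ↥(A ⊓ B) → sumJI (A ⊔ B) = finrank ℂ ↥(A ⊔ B) := by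
    intro A hA B hB h1 h2 h3
    have hu : JI.filter (· ≤ A ⊔ B) = JI.filter (· ≤ A) ∪ JI.filter (· ≤ B) := by
      ext J
      simp only [Finset.mem_union, Finset.mem_filter]
      constructor
      · rintro ⟨hJ, hle⟩
        rcases hJIprime J hJ A hA B hB hle with h | h
        · exact Or.inl ⟨hJ, h⟩
        · exact Or.inr ⟨hJ, h⟩
      · rintro (⟨hJ, hle⟩ | ⟨hJ, hle⟩)
        · exact ⟨hJ, le_trans hle le_sup_left⟩
        · exact ⟨hJ, le_trans hle le_sup_right⟩
    have hi : JI.filter (· ≤ A) ∩ JI.filter (· ≤ B) = JI.filter (· ≤ A ⊓ B) := by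
      ext J
      simp only [Finset.mem_inter, Finset.mem_filter, le_inf_iff]
      tauto
    have key := Finset.sum_union_inter (s₁ := JI.filter (· ≤ A)) (s₂ := JI.filter (· ≤ B))
      (f := fun J => finrank ℂ (C J))
    rw [hi, ← hu] at key
    have hrk := Submodule.finrank_sup_add_finrank_inf_eq A B
    simp only [hsumJI] at h1 h2 h3 ⊢
    omega
  have hdim : ∀ n, ∀ V ∈ G, finrank ℂ ↥V ≤ n → sumJI V = finrank ℂ ↥V := by
    intro n
    induction n with
    | zero =>
      intro V _ h
      have : V = ⊥ := Submodule.finrank_eq_zero.1 (Nat.le_zero.1 h)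
      rw [this, hsumbot, finrank_bot]
    | succ n ih =>
      intro V hVG h
      by_cases hji : pred V < V
      · have hfil : JI.filter (· ≤ V) = insert V (JI.filter (· ≤ pred V)) := by
          ext J
          simp only [Finset.mem_insert, Finset.mem_filter]
          constructor
          · rintro ⟨hJ, hle⟩
            rcases eq_or_ne J V with he | hne
            · exact Or.inl he
            · exact Or.inr ⟨hJ, hle_pred (hJIG J hJ) (lt_of_le_of_ne hle hne)⟩
          · rintro (rfl | ⟨hJ, hle⟩)
            · exact ⟨Finset.mem_filter.2 ⟨hVG, hji⟩, le_rfl⟩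
            · exact ⟨hJ, le_trans hle (hpred_le V)⟩
        have hVnot : V ∉ JI.filter (· ≤ pred V) := by
          intro hmem
          exact absurd hji (Finset.mem_filter.1 hmem).2.not_gt
        have hpr : finrank ℂ (pred V) < finrank ℂ V := Submodule.finrank_lt_finrank_of_lt hji
        have hIH := ih (pred V) (hpredG V) (by omega)
        have hcr := hCrank V hVG
        simp only [hsumJI] at hIH ⊢
        rw [hfil, Finset.sum_insert hVnot, hIH]
        omega
      · have hVpred : V = pred V := ((hpred_le V).lt_or_eq.resolve_left hji).symm
        have sub : ∀ T : Finset (Submodule ℂ E), (∀ x ∈ T, x ∈ G ∧ x < V) →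
            sumJI (T.sup id) = finrank ℂ ↥(T.sup id) := by
          intro T
          induction T using Finset.induction_on with
          | empty => intro _; rw [Finset.sup_empty, hsumbot, finrank_bot]
          | insert _ _ hnot ihT =>
            rename_i a T'
            intro hsub
            have haG := hsub a (Finset.mem_insert_self _ _)
            have hTG : ∀ x ∈ T', x ∈ G ∧ x < V :=
              fun x hx => hsub x (Finset.mem_insert_of_mem hx)
            have hAG : T'.sup id ∈ G := supg_mem G hbot hsupc _ (fun x hx => (hTG x hx).1)
            rw [Finset.sup_insert]
            refine hstep a haG.1 _ hAG ?_ ?_ ?_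
            · refine ih a haG.1 ?_
              have := Submodule.finrank_lt_finrank_of_lt haG.2
              omega
            · exact ihT hTG
            · refine ih _ (hinfc _ haG.1 _ hAG) ?_
              have : a ⊓ T'.sup id ≤ a := inf_le_left
              have h2 : a < V := haG.2
              have := Submodule.finrank_lt_finrank_of_lt (lt_of_le_of_lt this h2)
              omega
        have := sub (G.filter (· < V)) (fun x hx => by
          have := Finset.mem_filter.1 hx; exact ⟨this.1, this.2⟩)
        rw [hVpred]; exact this
  -- total dimension
  have hdimtop : ∑ J ∈ JI, finrank ℂ ↥(C J) = finrank ℂ E := by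
    have := hdim (finrank ℂ (⊤ : Submodule ℂ E)) ⊤ htop le_rfl
    simp only [hsumJI] at this
    rw [Finset.filter_true_of_mem (fun J _ => le_top), finrank_top] at this
    exact this
  -- bases of the complements
  let b : ∀ J : Submodule ℂ E, Basis (Fin (finrank ℂ ↥(C J))) ℂ ↥(C J) :=
    fun J => finBasis ℂ ↥(C J)
  let ι := Σ J : {x // x ∈ JI}, Fin (finrank ℂ ↥(C J.1))
  have hcard : Fintype.card ι = finrank ℂ E := by
    rw [Fintype.card_sigma]
    simp only [Fintype.card_fin]
    rw [Finset.sum_coe_sort JI (fun J => finrank ℂ ↥(C J))]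
    exact hdimtop
  let w : ι → E := fun x => ↑(b x.1.1 x.2)
  let e : ι ≃ Fin (finrank ℂ E) := Fintype.equivFinOfCardEq hcard
  let v : Fin (finrank ℂ E) → E := fun u => w (e.symm u)
  have hwv : ∀ x : ι, v (e x) = w x := by
    intro x; show w (e.symm (e x)) = w x; rw [e.symm_apply_apply]
  -- C J is the sup of the lines of its basis
  have hCsup : ∀ J : Submodule ℂ E,
      (⨆ k : Fin (finrank ℂ ↥(C J)), (ℂ ∙ ((b J k : E)))) = C J := by
    intro J
    rw [← Submodule.span_range_eq_iSup]
    have h1 : Set.range (fun k => ((b J k : E))) = (C J).subtype '' Set.range (b J) := by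
      rw [← Set.range_comp]; rfl
    rw [h1, Submodule.span_image, Basis.span_eq, Submodule.map_top, Submodule.range_subtype]
  have htople : (⊤ : Submodule ℂ E) ≤ JI.sup C := by
    have h := hspan (finrank ℂ (⊤ : Submodule ℂ E)) ⊤ htop le_rfl
    rwa [Finset.filter_true_of_mem (fun J _ => le_top)] at h
  have hvspan : ⊤ ≤ Submodule.span ℂ (Set.range v) := by
    have hrange : Set.range w ⊆ Set.range v := by
      rintro x ⟨y, rfl⟩; exact ⟨e y, hwv y⟩
    refine le_trans htople (Finset.sup_le fun J hJ => ?_)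
    rw [← hCsup J]
    refine iSup_le fun k => ?_
    rw [Submodule.span_singleton_le_iff_mem]
    exact Submodule.subset_span (hrange ⟨⟨⟨J, hJ⟩, k⟩, rfl⟩)
  let bas := basisOfTopLeSpanOfCardEqFinrank v hvspan (by simp)
  have hlin : LinearIndependent ℂ v := by
    have := bas.linearIndependent
    rwa [coe_basisOfTopLeSpanOfCardEqFinrank] at this
  refine ⟨finrank ℂ E, fun u => ℂ ∙ v u, ?_, ?_, ?_, ?_⟩
  · intro u; exact finrank_span_singleton (hlin.ne_zero u)
  · exact hlin.iSupIndep_span_singleton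
  · rw [← Submodule.span_range_eq_iSup]
    exact le_antisymm le_top hvspan
  · intro V hVG
    refine le_antisymm ?_ (iSup₂_le fun u hu => hu)
    refine le_trans (hspan (finrank ℂ ↥V) V hVG le_rfl) (Finset.sup_le ?_)
    intro J hJf
    obtain ⟨hJ, hJle⟩ := Finset.mem_filter.1 hJf
    rw [← hCsup J]
    refine iSup_le fun k => ?_
    have hvk : (ℂ ∙ ((b J k : E))) = ℂ ∙ v (e ⟨⟨J, hJ⟩, k⟩) := by
      rw [hwv ⟨⟨J, hJ⟩, k⟩]
    have hmem : (ℂ ∙ v (e ⟨⟨J, hJ⟩, k⟩)) ≤ V := by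
      rw [← hvk, Submodule.span_singleton_le_iff_mem]
      exact hJle ((hC3 J) (b J k).2)
    rw [hvk]
    exact le_biSup (fun u => ℂ ∙ v u) hmem

theorem genLat_finset_inf {S : Set (Submodule ℂ E)} :
    ∀ A : Finset (Submodule ℂ E), A.Nonempty → ↑A ⊆ S → GenLat S (A.inf id) := by
  classical
  intro A hne
  induction hne using Finset.Nonempty.cons_induction with
  | singleton a =>
    intro h
    rw [Finset.inf_singleton]
    exact GenLat.base (h (by simp))
  | cons a s ha hs ih =>
    intro h
    rw [Finset.inf_cons]
    exact GenLat.inf (GenLat.base (h (by simp)))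
      (ih fun x hx => h (by simp [hx]))

theorem genLat_finset_sup {S : Set (Submodule ℂ E)}
    {f : Finset (Submodule ℂ E) → Submodule ℂ E} :
    ∀ T : Finset (Finset (Submodule ℂ E)), T.Nonempty → (∀ A ∈ T, GenLat S (f A)) →
      GenLat S (T.sup f) := by
  classical
  intro T hne
  induction hne using Finset.Nonempty.cons_induction with
  | singleton A =>
    intro h
    rw [Finset.sup_singleton]
    exact h A (by simp)
  | cons A T' hA hT' ih =>
    intro h
    rw [Finset.sup_cons]
    exact GenLat.sup (h A (by simp)) (ih fun B hB => h B (by simp [hB]))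

end Aux


/-- final claim of Proposition "defn": if the filtrations `E^i(j)`, `i ∈ σ`,
admit a compatible decomposition of `E` into one-dimensional subspaces, and `F` is a
subspace generating, together with the filtration pieces, a distributive sublattice of
the lattice of subspaces, then there is a compatible decomposition into one-dimensional
subspaces which is moreover adapted to `F`. -/
theorem exists_compatible_decomposition_adapted_to_subspace
    {E : Type*} [AddCommGroup E] [Module ℂ E] [FiniteDimensional ℂ E]
    {I : Type*} [Fintype I]
    (Efil : I → ℤ → Submodule ℂ E)
    (hanti : ∀ i, Antitone (Efil i))
    (hexh : ∀ i, ∃ a : ℤ, ∀ j ≤ a, Efil i j = ⊤)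
    (hsep : ∀ i, ∃ b : ℤ, ∀ j : ℤ, b < j → Efil i j = ⊥)
    (σ : Set I)
    (U : Type*) [Fintype U] (L : U → Submodule ℂ E)
    (hone : ∀ u, Module.finrank ℂ ↥(L u) = 1)
    (hindep : iSupIndep L) (hsupL : (⨆ u, L u) = ⊤)
    (hcomp : ∀ i ∈ σ, ∀ j : ℤ, Efil i j = ⨆ u ∈ {u : U | L u ≤ Efil i j}, L u)
    (F : Submodule ℂ E)
    (hdistrib : ∀ A B C : Submodule ℂ E,
      GenLat ({F} ∪ {V | ∃ i ∈ σ, ∃ j : ℤ, V = Efil i j}) A →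
      GenLat ({F} ∪ {V | ∃ i ∈ σ, ∃ j : ℤ, V = Efil i j}) B →
      GenLat ({F} ∪ {V | ∃ i ∈ σ, ∃ j : ℤ, V = Efil i j}) C →
      A ⊓ (B ⊔ C) = (A ⊓ B) ⊔ (A ⊓ C)) :
    ∃ (U' : Type) (_ : Fintype U') (L' : U' → Submodule ℂ E),
      (∀ u, Module.finrank ℂ ↥(L' u) = 1) ∧
      iSupIndep L' ∧ (⨆ u, L' u) = ⊤ ∧
      (∀ i ∈ σ, ∀ j : ℤ, Efil i j = ⨆ u ∈ {u : U' | L' u ≤ Efil i j}, L' u) ∧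
      F = ⨆ u ∈ {u : U' | L' u ≤ F}, L' u := by
  classical
  set S : Set (Submodule ℂ E) := {F} ∪ {V | ∃ i ∈ σ, ∃ j : ℤ, V = Efil i j} with hSdef
  -- `S` is a finite set of subspaces
  have hSfin : S.Finite := by
    have hone : ∀ i : I, (Set.range (Efil i)).Finite := by
      intro i
      obtain ⟨a, ha⟩ := hexh i
      obtain ⟨b, hb⟩ := hsep i
      have hsub : Set.range (Efil i) ⊆ insert ⊤ (insert ⊥ (Efil i '' Set.Icc a b)) := by
        rintro V ⟨j, rfl⟩
        rcases le_or_gt j a with h | h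
        · exact Set.mem_insert_iff.2 (Or.inl (ha j h))
        rcases le_or_gt j b with h2 | h2
        · exact Set.mem_insert_iff.2 (Or.inr (Set.mem_insert_iff.2
            (Or.inr ⟨j, ⟨h.le, h2⟩, rfl⟩)))
        · exact Set.mem_insert_iff.2 (Or.inr (Set.mem_insert_iff.2 (Or.inl (hb j h2))))
      exact Set.Finite.subset ((((Set.finite_Icc a b).image _).insert ⊥).insert ⊤) hsub
    refine Set.Finite.union (Set.finite_singleton F) ?_
    refine Set.Finite.subset (Set.finite_iUnion hone) ?_
    rintro V ⟨i, hi, j, rfl⟩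
    exact Set.mem_iUnion.2 ⟨i, ⟨j, rfl⟩⟩
  set S' : Finset (Submodule ℂ E) := hSfin.toFinset with hS'
  set f : Finset (Submodule ℂ E) → Submodule ℂ E := fun A => A.inf id with hf
  set P : Finset (Finset (Submodule ℂ E)) := S'.powerset.filter Finset.Nonempty with hP
  set G₀ : Finset (Submodule ℂ E) :=
    (P.powerset.filter Finset.Nonempty).image (fun T => T.sup f) with hG₀
  have hmemP : ∀ A : Finset (Submodule ℂ E), A.Nonempty → ↑A ⊆ S → A ∈ P := by
    intro A h1 h2
    refine Finset.mem_filter.2 ⟨Finset.mem_powerset.2 ?_, h1⟩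
    intro x hx
    exact hSfin.mem_toFinset.2 (h2 hx)
  have hPmem : ∀ A ∈ P, A.Nonempty ∧ ↑A ⊆ S := by
    intro A hA
    obtain ⟨h1, h2⟩ := Finset.mem_filter.1 hA
    refine ⟨h2, ?_⟩
    intro x hx
    exact hSfin.mem_toFinset.1 (Finset.mem_powerset.1 h1 hx)
  have hmemG₀ : ∀ T : Finset (Finset (Submodule ℂ E)), T.Nonempty → (∀ A ∈ T, A ∈ P) →
      T.sup f ∈ G₀ := by
    intro T h1 h2
    exact Finset.mem_image_of_mem _ (Finset.mem_filter.2 ⟨Finset.mem_powerset.2 h2, h1⟩)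
  have hG₀mem : ∀ V ∈ G₀, ∃ T : Finset (Finset (Submodule ℂ E)),
      T.Nonempty ∧ (∀ A ∈ T, A ∈ P) ∧ V = T.sup f := by
    intro V hV
    obtain ⟨T, hT, rfl⟩ := Finset.mem_image.1 hV
    obtain ⟨h1, h2⟩ := Finset.mem_filter.1 hT
    exact ⟨T, h2, fun A hA => Finset.mem_powerset.1 h1 hA, rfl⟩
  -- all members of `G₀` lie in the generated lattice
  have hG₀gen : ∀ V ∈ G₀, GenLat S V := by
    intro V hV
    obtain ⟨T, hTne, hTP, rfl⟩ := hG₀mem V hV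
    refine genLat_finset_sup T hTne fun A hA => ?_
    obtain ⟨h1, h2⟩ := hPmem A (hTP A hA)
    exact genLat_finset_inf A h1 h2
  have hSsub : ∀ x ∈ S, x ∈ G₀ := by
    intro x hx
    have h1 : ({({x} : Finset (Submodule ℂ E))} : Finset (Finset (Submodule ℂ E))).sup f = x := by
      rw [Finset.sup_singleton, hf]
      exact Finset.inf_singleton
    rw [← h1]
    refine hmemG₀ _ (Finset.singleton_nonempty _) ?_
    intro A hA
    rw [Finset.mem_singleton.1 hA]
    exact hmemP {x} (Finset.singleton_nonempty x) (by simpa using hx)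
  -- closure under sup
  have hsup₀ : ∀ A ∈ G₀, ∀ B ∈ G₀, A ⊔ B ∈ G₀ := by
    intro A hA B hB
    obtain ⟨T, hTne, hTP, rfl⟩ := hG₀mem A hA
    obtain ⟨T', hT'ne, hT'P, rfl⟩ := hG₀mem B hB
    rw [← Finset.sup_union]
    refine hmemG₀ _ (hTne.mono Finset.subset_union_left) ?_
    intro A hA
    rcases Finset.mem_union.1 hA with h | h
    · exact hTP A h
    · exact hT'P A h
  -- distributing an intersection over a finite sup
  have hdsup : ∀ X, GenLat S X → ∀ T : Finset (Finset (Submodule ℂ E)), T.Nonempty →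
      (∀ A ∈ T, GenLat S (f A)) → X ⊓ T.sup f = T.sup (fun A => X ⊓ f A) := by
    intro X hX T hTne
    induction hTne using Finset.Nonempty.cons_induction with
    | singleton A =>
      intro h
      rw [Finset.sup_singleton, Finset.sup_singleton]
    | cons A T' hA hT'ne ih =>
      intro h
      rw [Finset.sup_cons, Finset.sup_cons]
      rw [hdistrib X (f A) (T'.sup f) hX (h A (by simp))
        (genLat_finset_sup T' hT'ne fun B hB => h B (by simp [hB]))]
      rw [ih fun B hB => h B (by simp [hB])]
  -- closure under inf
  have hinf₀ : ∀ A ∈ G₀, ∀ B ∈ G₀, A ⊓ B ∈ G₀ := by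
    intro A hA B hB
    obtain ⟨T, hTne, hTP, rfl⟩ := hG₀mem A hA
    obtain ⟨T', hT'ne, hT'P, rfl⟩ := hG₀mem B hB
    have hgf : ∀ A' ∈ T, GenLat S (f A') := by
      intro A' hA'
      obtain ⟨h1, h2⟩ := hPmem A' (hTP A' hA')
      exact genLat_finset_inf A' h1 h2
    have hgf' : ∀ B' ∈ T', GenLat S (f B') := by
      intro B' hB'
      obtain ⟨h1, h2⟩ := hPmem B' (hT'P B' hB')
      exact genLat_finset_inf B' h1 h2
    have key : T.sup f ⊓ T'.sup f = ((T ×ˢ T').image fun p => p.1 ∪ p.2).sup f := by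
      rw [Finset.sup_image]
      have h1 : T.sup f ⊓ T'.sup f = T'.sup f ⊓ T.sup f := inf_comm _ _
      rw [h1, hdsup (T'.sup f) (genLat_finset_sup T' hT'ne hgf') T hTne hgf]
      rw [Finset.sup_product_left]
      refine Finset.sup_congr rfl fun A' hA' => ?_
      rw [inf_comm, hdsup (f A') (hgf A' hA') T' hT'ne hgf']
      refine Finset.sup_congr rfl fun B' hB' => ?_
      show f A' ⊓ f B' = ((fun p : Finset (Submodule ℂ E) × Finset (Submodule ℂ E) =>
        f (p.1 ∪ p.2)) (A', B'))
      rw [hf]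
      exact (Finset.inf_union).symm
    rw [key]
    refine hmemG₀ _ ((hTne.product hT'ne).image _) ?_
    intro A' hA'
    obtain ⟨p, hp, rfl⟩ := Finset.mem_image.1 hA'
    obtain ⟨hp1, hp2⟩ := Finset.mem_product.1 hp
    obtain ⟨h1, h2⟩ := hPmem _ (hTP _ hp1)
    obtain ⟨h1', h2'⟩ := hPmem _ (hT'P _ hp2)
    refine hmemP _ (h1.mono Finset.subset_union_left) ?_
    intro x hx
    rcases Finset.mem_union.1 hx with h | h
    · exact h2 h
    · exact h2' h
  -- the ambient finite sublattice
  set G : Finset (Submodule ℂ E) := insert ⊥ (insert ⊤ G₀) with hG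
  have hmemG : ∀ V ∈ G, V = ⊥ ∨ V = ⊤ ∨ V ∈ G₀ := by
    intro V hV
    rcases Finset.mem_insert.1 hV with h | h
    · exact Or.inl h
    rcases Finset.mem_insert.1 h with h | h
    · exact Or.inr (Or.inl h)
    · exact Or.inr (Or.inr h)
  have hG₀G : ∀ V ∈ G₀, V ∈ G := fun V hV =>
    Finset.mem_insert_of_mem (Finset.mem_insert_of_mem hV)
  have hbotG : (⊥ : Submodule ℂ E) ∈ G := Finset.mem_insert_self _ _
  have htopG : (⊤ : Submodule ℂ E) ∈ G :=
    Finset.mem_insert_of_mem (Finset.mem_insert_self _ _)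
  have hsupG : ∀ A ∈ G, ∀ B ∈ G, A ⊔ B ∈ G := by
    intro A hA B hB
    rcases hmemG A hA with rfl | rfl | hA₀
    · simpa using hB
    · simp [hG]
    rcases hmemG B hB with rfl | rfl | hB₀
    · simpa using hG₀G A hA₀
    · simp [hG]
    · exact hG₀G _ (hsup₀ A hA₀ B hB₀)
  have hinfG : ∀ A ∈ G, ∀ B ∈ G, A ⊓ B ∈ G := by
    intro A hA B hB
    rcases hmemG A hA with rfl | rfl | hA₀
    · simp [hG]
    · simpa using hB
    rcases hmemG B hB with rfl | rfl | hB₀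
    · simp [hG]
    · simpa using hG₀G A hA₀
    · exact hG₀G _ (hinf₀ A hA₀ B hB₀)
  have hdG : ∀ A ∈ G, ∀ B ∈ G, ∀ C ∈ G, A ⊓ (B ⊔ C) = (A ⊓ B) ⊔ (A ⊓ C) := by
    intro A hA B hB C hC
    rcases hmemG A hA with rfl | rfl | hA₀
    · simp
    · simp
    rcases hmemG B hB with rfl | rfl | hB₀
    · simp
    · simp
    rcases hmemG C hC with rfl | rfl | hC₀
    · simp
    · simp
    · exact hdistrib A B C (hG₀gen A hA₀) (hG₀gen B hB₀) (hG₀gen C hC₀)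
  obtain ⟨n, L', h1, h2, h3, h4⟩ := adapted_of_lattice G hbotG htopG hsupG hinfG hdG
  refine ⟨Fin n, inferInstance, L', h1, h2, h3, ?_, ?_⟩
  · intro i hi j
    refine h4 (Efil i j) (hG₀G _ (hSsub _ ?_))
    exact Set.mem_union_right _ ⟨i, hi, j, rfl⟩
  · exact h4 F (hG₀G _ (hSsub _ (Set.mem_union_left _ rfl)))

end ToricParliament
end

section
/- Let d ≥ 1 and let v₀, …, v_n be nonzero vectors of ℝ^d ⊆ ℂ^d that are pairwise linearly independent (no two are proportional; in particular no vector is the opposite of another). Take E = ℂ^d with the Klyachko filtrations of the tangent bundle: for each i ∈ {0, …, n}, E^i(j) = ℂ^d for j < 0, E^i(0) = ℂ·v_i, and E^i(j) = 0 for j ≥ 1. Let t₀, …, t_n be nonnegative real weights. If μ_t(F) ≤ μ_t(ℂ^d) holds for every nonzero subspace F ⊆ ℂ^d, then for every index i₀ one has t_{i₀} ≤ (Σ_{i=0}^n t_i)/d. -/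
namespace ToricParliament

/-- The Klyachko filtrations of the tangent bundle of a smooth complete toric variety
with primitive ray generators `v i`: `E^i(j) = ℂ^d` for `j < 0`, `E^i(0) = ℂ·v_i`, and
`E^i(j) = 0` for `j ≥ 1`. -/
noncomputable def tangentFil {d n : ℕ} (v : Fin (n + 1) → (Fin d → ℝ)) :
    Fin (n + 1) → ℤ → Submodule ℂ (Fin d → ℂ) := fun i j =>
  if j < 0 then ⊤
  else if j = 0 then Submodule.span ℂ {(fun x => (v i x : ℂ) : Fin d → ℂ)}
  else ⊥

lemma jumpVal_eq {E : Type*} [AddCommGroup E] [Module ℂ E]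
    (W : ℤ → Submodule ℂ E) (F : Submodule ℂ E) (l k : ℕ) (a : ℤ)
    (h : ∀ j : ℤ, (l - k + 1 ≤ Module.finrank ℂ ↥(F ⊓ W j)) ↔ j ≤ a) :
    jumpVal W F l k = a := by
  have hs : { j : ℤ | l - k + 1 ≤ Module.finrank ℂ ↥(F ⊓ W j) } = Set.Iic a :=
    Set.ext h
  rw [jumpVal, hs, csSup_Iic]

lemma tangentFil_neg {d n : ℕ} (v : Fin (n + 1) → (Fin d → ℝ)) (i : Fin (n + 1))
    {j : ℤ} (hj : j < 0) : tangentFil v i j = ⊤ := if_pos hj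

lemma tangentFil_zero {d n : ℕ} (v : Fin (n + 1) → (Fin d → ℝ)) (i : Fin (n + 1)) :
    tangentFil v i 0 = Submodule.span ℂ {(fun x => (v i x : ℂ) : Fin d → ℂ)} := by
  simp [tangentFil]

lemma tangentFil_pos {d n : ℕ} (v : Fin (n + 1) → (Fin d → ℝ)) (i : Fin (n + 1))
    {j : ℤ} (hj : 0 < j) : tangentFil v i j = ⊥ := by
  rw [tangentFil, if_neg (by omega), if_neg (by omega)]

/-- necessary direction of the Corollary: let `v₀, …, v_n` be nonzero,
pairwise non-proportional vectors of `ℝ^d ⊆ ℂ^d`, with the Klyachko filtrations of the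
tangent bundle, and let `t` be nonnegative weights. If `μ_t(F) ≤ μ_t(ℂ^d)` for every
nonzero subspace `F ⊆ ℂ^d`, then `t i₀ ≤ (∑ i, t i) / d` for every index `i₀`. -/
theorem tangent_semistable_necessary (d n : ℕ) (hd : 1 ≤ d)
    (v : Fin (n + 1) → (Fin d → ℝ))
    (hv0 : ∀ i, v i ≠ 0)
    (hpair : ∀ i i', i ≠ i' → ∀ c : ℝ, v i' ≠ c • v i)
    (t : Fin (n + 1) → ℝ) (ht : ∀ i, 0 ≤ t i)
    (hsemi : ∀ F : Submodule ℂ (Fin d → ℂ), F ≠ ⊥ →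
      slope (tangentFil v) t F ≤ slope (tangentFil v) t ⊤) :
    ∀ i₀ : Fin (n + 1), t i₀ ≤ (∑ i, t i) / d := by
  intro i₀
  set cv : Fin (n + 1) → (Fin d → ℂ) := fun i x => (v i x : ℂ) with hcv
  have hcveq : ∀ i : Fin (n + 1), (fun x => (v i x : ℂ) : Fin d → ℂ) = cv i :=
    fun i => rfl
  have hcv0 : ∀ i, cv i ≠ 0 := by
    intro i h
    apply hv0 i
    funext x
    have := congrFun h x
    simpa [hcv] using this
  have hdim_top : Module.finrank ℂ ↥(⊤ : Submodule ℂ (Fin d → ℂ)) = d := by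
    simp [Module.finrank_fintype_fun_eq_card]
  set F : Submodule ℂ (Fin d → ℂ) := Submodule.span ℂ {cv i₀} with hF
  have hFrank : Module.finrank ℂ ↥F = 1 := finrank_span_singleton (hcv0 i₀)
  have hFne : F ≠ ⊥ := by
    intro h
    exact hcv0 i₀ (by simpa [hF, Submodule.span_singleton_eq_bot] using h)
  have hdisj : ∀ i, i ≠ i₀ → F ⊓ Submodule.span ℂ {cv i} = ⊥ := by
    intro i hi
    rw [eq_bot_iff]
    rintro w ⟨hw1, hw2⟩
    rw [SetLike.mem_coe, Submodule.mem_span_singleton] at hw1 hw2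
    obtain ⟨a, ha⟩ := hw1
    obtain ⟨b, hb⟩ := hw2
    rcases eq_or_ne a 0 with h0 | h0
    · simp [← ha, h0]
    · exfalso
      have hab : cv i₀ = (a⁻¹ * b) • cv i := by
        have h1 : a • cv i₀ = b • cv i := ha.trans hb.symm
        calc cv i₀ = a⁻¹ • (a • cv i₀) := by
              rw [smul_smul, inv_mul_cancel₀ h0, one_smul]
          _ = a⁻¹ • (b • cv i) := by rw [h1]
          _ = (a⁻¹ * b) • cv i := by rw [smul_smul]
      set z : ℂ := a⁻¹ * b with hz
      apply hpair i i₀ hi z.re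
      funext x
      have hx := congrFun hab x
      have hx' : (v i₀ x : ℂ) = z * (v i x : ℂ) := by simpa [hcv] using hx
      have hre := congrArg Complex.re hx'
      simp [Complex.mul_re] at hre
      simpa using hre
  -- jump values of F
  have hjF : ∀ i, jumpVal (tangentFil v i) F 1 1 = if i = i₀ then 0 else -1 := by
    intro i
    by_cases hii : i = i₀
    · subst hii
      rw [if_pos rfl]
      apply jumpVal_eq
      intro j
      rcases lt_trichotomy j 0 with hj | hj | hj
      · rw [tangentFil_neg v i hj, inf_top_eq, hFrank]
        omega
      · subst hj
        rw [tangentFil_zero v i, hcveq i, ← hF, inf_idem, hFrank]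
        omega
      · rw [tangentFil_pos v i hj, inf_bot_eq, finrank_bot]
        omega
    · rw [if_neg hii]
      apply jumpVal_eq
      intro j
      rcases lt_trichotomy j 0 with hj | hj | hj
      · rw [tangentFil_neg v i hj, inf_top_eq, hFrank]
        omega
      · subst hj
        rw [tangentFil_zero v i, hcveq i, hdisj i hii, finrank_bot]
        omega
      · rw [tangentFil_pos v i hj, inf_bot_eq, finrank_bot]
        omega
  -- jump values of ⊤
  have hjT : ∀ i : Fin (n + 1), ∀ k ∈ Finset.Icc 1 d,
      jumpVal (tangentFil v i) ⊤ d k = if k = d then 0 else -1 := by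
    intro i k hk
    rw [Finset.mem_Icc] at hk
    have hspan : Module.finrank ℂ ↥(Submodule.span ℂ {cv i}) = 1 :=
      finrank_span_singleton (hcv0 i)
    by_cases hkd : k = d
    · subst hkd
      rw [if_pos rfl]
      apply jumpVal_eq
      intro j
      rcases lt_trichotomy j 0 with hj | hj | hj
      · rw [tangentFil_neg v i hj, top_inf_eq, hdim_top]
        omega
      · subst hj
        rw [tangentFil_zero v i, hcveq i, top_inf_eq, hspan]
        omega
      · rw [tangentFil_pos v i hj, inf_bot_eq, finrank_bot]
        omega
    · rw [if_neg hkd]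
      apply jumpVal_eq
      intro j
      rcases lt_trichotomy j 0 with hj | hj | hj
      · rw [tangentFil_neg v i hj, top_inf_eq, hdim_top]
        omega
      · subst hj
        rw [tangentFil_zero v i, hcveq i, top_inf_eq, hspan]
        omega
      · rw [tangentFil_pos v i hj, inf_bot_eq, finrank_bot]
        omega
  -- sum of jump values of ⊤ along each filtration
  have hsumT : ∀ i : Fin (n + 1),
      ∑ k ∈ Finset.Icc 1 d, (jumpVal (tangentFil v i) ⊤ d k : ℝ) = 1 - (d : ℝ) := by
    intro i
    have h1 : ∀ k ∈ Finset.Icc 1 d, (jumpVal (tangentFil v i) ⊤ d k : ℝ)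
        = (if k = d then (1 : ℝ) else 0) - 1 := by
      intro k hk
      rw [hjT i k hk]
      by_cases h : k = d <;> simp [h]
    rw [Finset.sum_congr rfl h1, Finset.sum_sub_distrib,
      Finset.sum_ite_eq' (Finset.Icc 1 d) d (fun _ => (1 : ℝ))]
    simp [Finset.mem_Icc, hd, Nat.card_Icc]
  -- slope of ⊤
  have hslope_top : slope (tangentFil v) t ⊤ =
      (d : ℝ)⁻¹ * ((1 - (d : ℝ)) * ∑ i, t i) := by
    rw [slope, hdim_top]
    congr 1
    calc ∑ i, t i * ∑ k ∈ Finset.Icc 1 d, (jumpVal (tangentFil v i) ⊤ d k : ℝ)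
        = ∑ i, t i * (1 - (d : ℝ)) :=
          Finset.sum_congr rfl (fun i _ => by rw [hsumT i])
      _ = (1 - (d : ℝ)) * ∑ i, t i := by rw [← Finset.sum_mul, mul_comm]
  -- slope of F
  have hslope_F : slope (tangentFil v) t F = t i₀ - ∑ i, t i := by
    rw [slope, hFrank]
    simp only [Finset.Icc_self, Finset.sum_singleton]
    have h1 : ∀ i ∈ Finset.univ, t i * (jumpVal (tangentFil v i) F 1 1 : ℝ)
        = (if i = i₀ then t i else 0) - t i := by
      intro i _
      rw [hjF i]
      by_cases h : i = i₀ <;> simp [h]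
    rw [Finset.sum_congr rfl h1, Finset.sum_sub_distrib,
      Finset.sum_ite_eq' Finset.univ i₀ t]
    simp
  -- conclude
  have H := hsemi F hFne
  rw [hslope_F, hslope_top] at H
  have hdpos : (0 : ℝ) < d := by
    exact_mod_cast Nat.lt_of_lt_of_le Nat.zero_lt_one hd
  rw [le_div_iff₀ hdpos]
  have h2 : (d : ℝ) * ((d : ℝ)⁻¹ * ((1 - (d : ℝ)) * ∑ i, t i))
      = (1 - (d : ℝ)) * ∑ i, t i := by
    field_simp
  have h3 := mul_le_mul_of_nonneg_left H hdpos.le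
  rw [h2] at h3
  nlinarith [h3]


end ToricParliament
end
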